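/- (Remark: block-diagonal case.) Let W be a real m×m positive definite matrix, let K₂₂ be a real (n−m)×(n−m) positive semidefinite matrix, and let K be the n×n block-diagonal matrix with diagonal blocks W and K₂₂ (i.e. the off-diagonal block K₂₁ is zero). Let C be the n×m matrix consisting of the first m columns of K, i.e. C = [W; 0]. Let W = VΣVᵀ be a spectral decomposition with V m×m orthogonal and Σ diagonal with positive nonincreasing entries, let r ≤ m, and write V_r for the first r columns of V and Σ_r for the leading r×r block. Then the standard rank-r Nyström approximation G_nys = C V_r Σ_r⁻¹ V_rᵀ Cᵀ is a best rank-r approximation of CW⁻¹Cᵀ in the Frobenius norm: for every real n×n matrix G′ with rank(G′) ≤ r, ‖CW⁻¹Cᵀ − G_nys‖_F ≤ ‖CW⁻¹Cᵀ − G′‖_F. Hence the modified and standard Nyström methods produce the same rank-r approximation of K. -/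

import Mathlib

open Matrix

/-- Frobenius norm of a real matrix: ‖A‖_F = sqrt(trace(Aᵀ A)). -/
noncomputable def frobNorm {α β : Type*} [Fintype α] [Fintype β] (A : Matrix α β ℝ) : ℝ :=
  Real.sqrt (Matrix.trace (Aᵀ * A))

/-!
Since `C = [W; 0]`, both `C W⁻¹ Cᵀ` and `G_nys` vanish outside their leading `m × m` block, and
conjugation by `U = diag(V, 1)` diagonalises them simultaneously: `C W⁻¹ Cᵀ = U diag(d, 0) Uᵀ` and
`G_nys = U diag(d₁, …, d_r, 0, …, 0) Uᵀ`. So `G_nys` is the spectral truncation of `C W⁻¹ Cᵀ`, and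
the claim is the Eckart–Young theorem for a symmetric matrix `A = U diag(λ) Uᵀ`. For that, let the
orthonormal columns of `Q` span `ker G'`; there are at least `n - r` of them. Then
`‖A - G'‖² ≥ ‖(A - G')Q‖² = ‖AQ‖² = ∑ λᵢ² pᵢ`, where the squared row norms `pᵢ` of `UᵀQ` lie in
`[0, 1]` and sum to at least `n - r`; such a weighted sum is at least the sum of the `n - r`
smallest `λᵢ²`.
-/

open Module Finset

lemma exists_orthonormal_cols_mul_eq_zero {κ ι : Type*} [Fintype κ] [Fintype ι] [DecidableEq ι]
    (B : Matrix κ ι ℝ) :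
    ∃ (N : ℕ) (Q : Matrix ι (Fin N) ℝ), Fintype.card ι ≤ N + B.rank ∧ Qᵀ * Q = 1 ∧ B * Q = 0 := by
  set f := toLpLin 2 2 B
  let b := stdOrthonormalBasis ℝ (LinearMap.ker f)
  refine ⟨finrank ℝ (LinearMap.ker f), of fun i j => (b j : EuclideanSpace ℝ ι) i, ?_, ?_, ?_⟩
  · have := LinearMap.finrank_range_add_finrank_ker f
    rw [finrank_euclideanSpace] at this
    rw [rank_eq_finrank_range_toLin B (PiLp.basisFun 2 ℝ κ) (PiLp.basisFun 2 ℝ ι)]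
    change _ ≤ _ + finrank ℝ (LinearMap.range f)
    omega
  · ext j j'
    have h := orthonormal_iff_ite.mp b.orthonormal j j'
    rw [Submodule.coe_inner, PiLp.inner_apply] at h
    simp only [RCLike.inner_apply, conj_trivial] at h
    rw [mul_apply, one_apply, ← h]
    exact sum_congr rfl fun i _ => mul_comm _ _
  · ext i j
    have h : f (b j) = 0 := (b j).2
    have hi := congrArg (fun v : EuclideanSpace ℝ κ => v i) h
    simp only [f, toLpLin_apply, PiLp.zero_apply] at hi
    simpa [mul_apply, mulVec, dotProduct] using hi

section

variable {ι κ ν : Type*} [Fintype ι] [Fintype κ] [Fintype ν]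

lemma trace_transpose_mul_self_eq_sum (X : Matrix ι κ ℝ) :
    trace (Xᵀ * X) = ∑ i, ∑ j, X i j ^ 2 := by
  simp only [trace, Matrix.diag, mul_apply, transpose_apply, ← sq]
  exact sum_comm

lemma trace_transpose_mul_self_nonneg (X : Matrix ι κ ℝ) : 0 ≤ trace (Xᵀ * X) := by
  rw [trace_transpose_mul_self_eq_sum]
  positivity

lemma trace_transpose_mul_self_of_orthogonal [DecidableEq ι] {U : Matrix ι ι ℝ} (hU : Uᵀ * U = 1)
    (X : Matrix ι κ ℝ) : trace ((U * X)ᵀ * (U * X)) = trace (Xᵀ * X) := by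
  rw [transpose_mul, Matrix.mul_assoc, ← Matrix.mul_assoc Uᵀ, hU, Matrix.one_mul]

lemma trace_transpose_mul_self_mul (M : Matrix ι κ ℝ) (X : Matrix κ ν ℝ) :
    trace ((M * X)ᵀ * (M * X)) = trace (Mᵀ * M * (X * Xᵀ)) := by
  rw [transpose_mul, Matrix.mul_assoc, trace_mul_comm]
  simp only [Matrix.mul_assoc]

lemma trace_transpose_mul_self_mul_le [DecidableEq κ] [DecidableEq ν] (M : Matrix ι κ ℝ)
    {Q : Matrix κ ν ℝ} (hQ : Qᵀ * Q = 1) : trace ((M * Q)ᵀ * (M * Q)) ≤ trace (Mᵀ * M) := by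
  set S : Matrix κ κ ℝ := 1 - Q * Qᵀ
  have hSS : S * Sᵀ = S := by
    have hPP : Q * Qᵀ * (Q * Qᵀ) = Q * Qᵀ := by
      rw [Matrix.mul_assoc, ← Matrix.mul_assoc Qᵀ, hQ, Matrix.one_mul]
    simp only [S, transpose_sub, transpose_one, transpose_mul, transpose_transpose,
      Matrix.sub_mul, Matrix.mul_sub, Matrix.one_mul, Matrix.mul_one, hPP]
    abel
  have hsplit : trace (Mᵀ * M) = trace ((M * Q)ᵀ * (M * Q)) + trace ((M * S)ᵀ * (M * S)) := by
    rw [trace_transpose_mul_self_mul, trace_transpose_mul_self_mul, hSS, ← trace_add,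
      ← Matrix.mul_add]
    simp [S]
  linarith [trace_transpose_mul_self_nonneg (M * S)]

lemma sum_sq_le_one_of_transpose_mul_self_eq_one [DecidableEq κ] {R : Matrix ι κ ℝ}
    (hR : Rᵀ * R = 1) (i : ι) : ∑ j, R i j ^ 2 ≤ 1 := by
  set P := R * Rᵀ
  have hPii : P i i = ∑ j, R i j ^ 2 := by simp [P, mul_apply, sq]
  have hPP : P * P = P := by
    simp only [P, Matrix.mul_assoc, ← Matrix.mul_assoc Rᵀ, hR, Matrix.one_mul]
  -- `P` is an orthogonal projection, so `Pᵢᵢ = ∑ₗ Pᵢₗ² ≥ Pᵢᵢ²`.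
  have hsq : P i i ^ 2 ≤ P i i := by
    calc P i i ^ 2 ≤ ∑ l, P i l ^ 2 :=
          single_le_sum (f := fun l => P i l ^ 2) (fun _ _ => sq_nonneg _) (mem_univ i)
      _ = P i i := by
          conv_rhs => rw [← hPP, mul_apply]
          refine sum_congr rfl fun l _ => ?_
          rw [sq, show P l i = P i l by simp [P, mul_apply, mul_comm]]
  have hPii_nonneg : 0 ≤ P i i := hPii ▸ by positivity
  nlinarith

lemma sum_sum_sq_of_transpose_mul_self_eq_one [DecidableEq κ] {R : Matrix ι κ ℝ}
    (hR : Rᵀ * R = 1) : ∑ i, ∑ j, R i j ^ 2 = Fintype.card κ := by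
  rw [← trace_transpose_mul_self_eq_sum, hR, trace_one]

end

lemma sum_compl_le_sum_mul {ι : Type*} [Fintype ι] [DecidableEq ι] {w p : ι → ℝ} {t : Finset ι}
    {c : ℝ} (hc : 0 ≤ c) (hin : ∀ i ∈ t, c ≤ w i) (hout : ∀ i ∉ t, w i ≤ c)
    (hp₀ : ∀ i, 0 ≤ p i) (hp₁ : ∀ i, p i ≤ 1) (hcard : (tᶜ.card : ℝ) ≤ ∑ i, p i) :
    ∑ i ∈ tᶜ, w i ≤ ∑ i, w i * p i := by
  set s : ι → ℝ := fun i => if i ∈ tᶜ then 1 else 0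
  have hs : ∀ i, c * (p i - s i) ≤ w i * (p i - s i) := fun i => by
    by_cases hi : i ∈ t
    · simpa [s, hi] using mul_le_mul_of_nonneg_right (hin i hi) (hp₀ i)
    · simpa [s, hi] using mul_le_mul_of_nonpos_right (hout i hi) (by linarith [hp₁ i])
  have hsum_s : ∑ i, s i = tᶜ.card := by simp only [s, sum_boole, filter_mem_eq_inter, univ_inter]
  have hsum_ws : ∑ i, w i * s i = ∑ i ∈ tᶜ, w i := by
    simp only [s, mul_ite, mul_one, mul_zero, sum_ite_mem, univ_inter]
  have := sum_le_sum fun i (_ : i ∈ univ) => hs i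
  simp only [mul_sub, sum_sub_distrib, ← mul_sum, hsum_s, hsum_ws] at this
  linarith [mul_nonneg hc (sub_nonneg.2 hcard)]

section

variable {ι : Type*} [Fintype ι] [DecidableEq ι]

lemma trace_conj_diagonal_sq {U : Matrix ι ι ℝ} (hU : Uᵀ * U = 1) (μ : ι → ℝ) :
    trace ((U * diagonal μ * Uᵀ)ᵀ * (U * diagonal μ * Uᵀ)) = ∑ i, μ i ^ 2 := by
  rw [Matrix.mul_assoc, trace_transpose_mul_self_of_orthogonal hU, trace_transpose_mul_self_mul,
    trace_mul_comm, transpose_transpose, hU, Matrix.one_mul, diagonal_transpose,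
    diagonal_mul_diagonal, trace_diagonal]
  simp only [sq]

lemma sum_compl_sq_le_trace_sub {U : Matrix ι ι ℝ} (hU : Uᵀ * U = 1) {lam : ι → ℝ}
    {t : Finset ι} {c : ℝ} (hc : 0 ≤ c) (hin : ∀ i ∈ t, c ≤ lam i ^ 2)
    (hout : ∀ i ∉ t, lam i ^ 2 ≤ c) {G : Matrix ι ι ℝ} (hG : G.rank ≤ t.card) :
    ∑ i ∈ tᶜ, lam i ^ 2 ≤
      trace ((U * diagonal lam * Uᵀ - G)ᵀ * (U * diagonal lam * Uᵀ - G)) := by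
  obtain ⟨N, Q, hN, hQ, hGQ⟩ := exists_orthonormal_cols_mul_eq_zero G
  set R := Uᵀ * Q
  have hR : Rᵀ * R = 1 := by
    rw [transpose_mul, transpose_transpose, Matrix.mul_assoc, ← Matrix.mul_assoc U,
      mul_eq_one_comm.mp hU, Matrix.one_mul, hQ]
  have hAQ : (U * diagonal lam * Uᵀ - G) * Q = U * (diagonal lam * R) := by
    rw [Matrix.sub_mul, hGQ, sub_zero]
    simp only [R, Matrix.mul_assoc]
  have hcard : (tᶜ.card : ℝ) ≤ ∑ i, ∑ j, R i j ^ 2 := by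
    rw [sum_sum_sq_of_transpose_mul_self_eq_one hR, Fintype.card_fin, card_compl]
    exact_mod_cast (by omega : Fintype.card ι - t.card ≤ N)
  calc ∑ i ∈ tᶜ, lam i ^ 2
      ≤ ∑ i, lam i ^ 2 * ∑ j, R i j ^ 2 :=
        sum_compl_le_sum_mul hc hin hout (fun _ => by positivity)
          (sum_sq_le_one_of_transpose_mul_self_eq_one hR) hcard
    _ = trace (((U * diagonal lam * Uᵀ - G) * Q)ᵀ * ((U * diagonal lam * Uᵀ - G) * Q)) := by
        rw [hAQ, trace_transpose_mul_self_of_orthogonal hU, trace_transpose_mul_self_eq_sum]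
        simp only [diagonal_mul, mul_pow, mul_sum]
    _ ≤ _ := trace_transpose_mul_self_mul_le _ hQ

theorem frobNorm_sub_truncation_le {U : Matrix ι ι ℝ} (hU : Uᵀ * U = 1) {lam : ι → ℝ}
    {t : Finset ι} {c : ℝ} (hc : 0 ≤ c) (hin : ∀ i ∈ t, c ≤ lam i ^ 2)
    (hout : ∀ i ∉ t, lam i ^ 2 ≤ c) {G : Matrix ι ι ℝ} (hG : G.rank ≤ t.card) :
    frobNorm (U * diagonal lam * Uᵀ - U * diagonal (fun i => if i ∈ t then lam i else 0) * Uᵀ)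
      ≤ frobNorm (U * diagonal lam * Uᵀ - G) := by
  refine Real.sqrt_le_sqrt ?_
  have hsub : U * diagonal lam * Uᵀ - U * diagonal (fun i => if i ∈ t then lam i else 0) * Uᵀ
      = U * diagonal (fun i => if i ∈ tᶜ then lam i else 0) * Uᵀ := by
    rw [← Matrix.sub_mul, ← Matrix.mul_sub, diagonal_sub]
    congr 3
    ext i
    by_cases hi : i ∈ t <;> simp [hi]
  rw [hsub, trace_conj_diagonal_sq hU]
  simpa only [ite_pow, zero_pow two_ne_zero, sum_ite_mem, univ_inter]
    using sum_compl_sq_le_trace_sub hU hc hin hout hG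

end

lemma submatrix_mul_diagonal_mul_transpose {α ι κ κ' : Type*} [Fintype κ] [Fintype κ']
    [DecidableEq κ] [DecidableEq κ'] [CommSemiring α] (V : Matrix ι κ α) {e : κ' → κ}
    (he : Function.Injective e) (g : κ → α) :
    V.submatrix id e * diagonal (fun a => g (e a)) * (V.submatrix id e)ᵀ
      = V * diagonal (fun j => if j ∈ univ.image e then g j else 0) * Vᵀ := by
  ext i i'
  rw [mul_apply, mul_apply]
  simp only [mul_diagonal, submatrix_apply, transpose_apply, id, mul_ite, ite_mul, mul_zero,
    zero_mul, sum_ite_mem, univ_inter, sum_image fun a _ b _ h => he h]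

lemma conj_diagonal_mul_conj_diagonal {α ι : Type*} [Fintype ι] [DecidableEq ι] [CommSemiring α]
    {V : Matrix ι ι α} (hV : Vᵀ * V = 1) (a b : ι → α) :
    V * diagonal a * Vᵀ * (V * diagonal b * Vᵀ) = V * diagonal (a * b) * Vᵀ := by
  simp only [Matrix.mul_assoc, ← Matrix.mul_assoc Vᵀ, hV, Matrix.one_mul]
  rw [← Matrix.mul_assoc (diagonal a), diagonal_mul_diagonal]
  rfl

lemma conj_diagonal_mul_submatrix_inv_mul_conj_diagonal {α ι κ : Type*} [Fintype ι]
    [DecidableEq ι] [Fintype κ] [DecidableEq κ] [Field α] {V : Matrix ι ι α} (hV : Vᵀ * V = 1)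
    {d : ι → α} (hd : ∀ i, d i ≠ 0) {e : κ → ι} (he : Function.Injective e) :
    V * diagonal d * Vᵀ *
        (V.submatrix id e * diagonal (fun a => (d (e a))⁻¹) * (V.submatrix id e)ᵀ) *
        (V * diagonal d * Vᵀ)
      = V * diagonal (fun j => if j ∈ univ.image e then d j else 0) * Vᵀ := by
  rw [submatrix_mul_diagonal_mul_transpose V he fun j => (d j)⁻¹,
    conj_diagonal_mul_conj_diagonal hV, conj_diagonal_mul_conj_diagonal hV]
  refine congrArg (fun g => V * diagonal g * Vᵀ) (funext fun j => ?_)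
  simp only [Pi.mul_apply]
  split_ifs <;> simp [hd j]

lemma fromRows_zero_mul_mul_transpose {α m n k : Type*} [Fintype n] [CommSemiring α]
    (W : Matrix m n α) (M : Matrix n n α) :
    fromRows W (0 : Matrix k n α) * M * (fromRows W (0 : Matrix k n α))ᵀ
      = fromBlocks (W * M * Wᵀ) 0 0 0 := by
  rw [transpose_fromRows, transpose_zero, fromRows_mul, fromRows_mul_fromCols]
  simp

lemma fromBlocks_conj_diagonal {α m k : Type*} [Fintype m] [Fintype k] [DecidableEq m]
    [DecidableEq k] [CommSemiring α] (V : Matrix m m α) (g : m → α) :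
    fromBlocks V 0 0 1 * diagonal (Sum.elim g 0) * (fromBlocks V 0 0 (1 : Matrix k k α))ᵀ
      = fromBlocks (V * diagonal g * Vᵀ) 0 0 0 := by
  rw [← fromBlocks_diagonal, fromBlocks_transpose, fromBlocks_multiply, fromBlocks_multiply]
  simp

lemma transpose_fromBlocks_mul_self {α m k : Type*} [Fintype m] [Fintype k] [DecidableEq m]
    [DecidableEq k] [CommSemiring α] {V : Matrix m m α} (hV : Vᵀ * V = 1) :
    (fromBlocks V 0 0 (1 : Matrix k k α))ᵀ * fromBlocks V 0 0 1 = 1 := by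
  rw [fromBlocks_transpose, fromBlocks_multiply]
  simp [hV, fromBlocks_one]

theorem stmt_9_general {m k r : ℕ} (hr : 0 < r) (hrm : r ≤ m)
    (W : Matrix (Fin m) (Fin m) ℝ) (hW : W.PosDef)
    (K22 : Matrix (Fin k) (Fin k) ℝ)
    -- K is block diagonal with blocks W and K₂₂
    (K : Matrix (Fin m ⊕ Fin k) (Fin m ⊕ Fin k) ℝ)
    (hK : K = Matrix.fromBlocks W 0 0 K22)
    -- C consists of the first m columns of K, i.e. C = [W; 0]
    (C : Matrix (Fin m ⊕ Fin k) (Fin m) ℝ) (hC : C = K.submatrix id Sum.inl)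
    -- spectral decomposition W = V Σ Vᵀ with positive nonincreasing eigenvalues
    (V : Matrix (Fin m) (Fin m) ℝ) (d : Fin m → ℝ)
    (hV : Vᵀ * V = 1) (hd : ∀ i, 0 < d i) (hmono : Antitone d)
    (hspec : W = V * Matrix.diagonal d * Vᵀ)
    -- standard rank-r Nyström approximation G_nys = C V_r Σ_r⁻¹ V_rᵀ Cᵀ
    (Gnys : Matrix (Fin m ⊕ Fin k) (Fin m ⊕ Fin k) ℝ)
    (hGnys : Gnys = C * (V.submatrix id (Fin.castLE hrm) *
        Matrix.diagonal (fun i : Fin r => (d (Fin.castLE hrm i))⁻¹) *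
        (V.submatrix id (Fin.castLE hrm))ᵀ) * Cᵀ) :
    ∀ G' : Matrix (Fin m ⊕ Fin k) (Fin m ⊕ Fin k) ℝ, G'.rank ≤ r →
      frobNorm (C * W⁻¹ * Cᵀ - Gnys) ≤ frobNorm (C * W⁻¹ * Cᵀ - G') := by
  intro G' hG'
  set s := univ.image (Fin.castLE hrm)
  set t := s.disjSum (∅ : Finset (Fin k))
  set U := fromBlocks V 0 0 (1 : Matrix (Fin k) (Fin k) ℝ)
  have hs : ∀ l : Fin m, l ∈ s ↔ (l : ℕ) < r := fun l => by simp [s, Fin.exists_iff, Fin.ext_iff]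
  have ht : t.card = r := by simp [t, s, card_image_of_injective _ (Fin.castLE_injective hrm)]
  have hCW : C = fromRows W 0 := by ext (i | i) j <;> simp [hC, hK]
  have hWt : Wᵀ = W := hW.isHermitian
  have hA : C * W⁻¹ * Cᵀ = U * diagonal (Sum.elim d 0) * Uᵀ := by
    rw [hCW, fromRows_zero_mul_mul_transpose, hWt,
      mul_nonsing_inv _ ((isUnit_iff_isUnit_det W).mp hW.isUnit), Matrix.one_mul,
      fromBlocks_conj_diagonal, hspec]
  have hG : Gnys = U * diagonal (fun i => if i ∈ t then Sum.elim d 0 i else 0) * Uᵀ := by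
    rw [hGnys, hCW, fromRows_zero_mul_mul_transpose, hWt, hspec,
      conj_diagonal_mul_submatrix_inv_mul_conj_diagonal hV (fun l => (hd l).ne')
        (Fin.castLE_injective hrm), ← fromBlocks_conj_diagonal]
    refine congrArg (fun g => U * diagonal g * Uᵀ) (funext fun i => ?_)
    rcases i with l | j <;> simp [t, s]
  set i₀ : Fin m := ⟨r - 1, by omega⟩
  rw [hA, hG]
  refine frobNorm_sub_truncation_le (transpose_fromBlocks_mul_self hV) (c := d i₀ ^ 2)
    (sq_nonneg _) ?_ ?_ (ht ▸ hG')
  · rintro (l | j) hl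
    · rw [inl_mem_disjSum, hs] at hl
      exact pow_le_pow_left₀ (hd i₀).le (hmono (Fin.le_def.mpr (show (l : ℕ) ≤ r - 1 by omega))) 2
    · simp [t] at hl
  · rintro (l | j) hl
    · rw [inl_mem_disjSum, hs, not_lt] at hl
      exact pow_le_pow_left₀ (hd l).le (hmono (Fin.le_def.mpr (show r - 1 ≤ (l : ℕ) by omega))) 2
    · simpa using sq_nonneg (d i₀)

/-- Block-diagonal case (Remark 1): when K₂₁ = 0, the standard rank-r Nyström approximation
is a best rank-r Frobenius-norm approximation of C W⁻¹ Cᵀ, hence the standard and modified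
methods coincide.  Here n = m + k, with indices modelled by `Fin m ⊕ Fin k`. -/
theorem stmt_9 {m k r : ℕ} (hr : 0 < r) (hrm : r ≤ m)
    (W : Matrix (Fin m) (Fin m) ℝ) (hW : W.PosDef)
    (K22 : Matrix (Fin k) (Fin k) ℝ) (hK22 : K22.PosSemidef)
    -- K is block diagonal with blocks W and K₂₂
    (K : Matrix (Fin m ⊕ Fin k) (Fin m ⊕ Fin k) ℝ)
    (hK : K = Matrix.fromBlocks W 0 0 K22)
    -- C consists of the first m columns of K, i.e. C = [W; 0]
    (C : Matrix (Fin m ⊕ Fin k) (Fin m) ℝ) (hC : C = K.submatrix id Sum.inl)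
    -- spectral decomposition W = V Σ Vᵀ with positive nonincreasing eigenvalues
    (V : Matrix (Fin m) (Fin m) ℝ) (d : Fin m → ℝ)
    (hV : Vᵀ * V = 1) (hd : ∀ i, 0 < d i) (hmono : Antitone d)
    (hspec : W = V * Matrix.diagonal d * Vᵀ)
    -- standard rank-r Nyström approximation G_nys = C V_r Σ_r⁻¹ V_rᵀ Cᵀ
    (Gnys : Matrix (Fin m ⊕ Fin k) (Fin m ⊕ Fin k) ℝ)
    (hGnys : Gnys = C * (V.submatrix id (Fin.castLE hrm) *
        Matrix.diagonal (fun i : Fin r => (d (Fin.castLE hrm i))⁻¹) *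
        (V.submatrix id (Fin.castLE hrm))ᵀ) * Cᵀ) :
    ∀ G' : Matrix (Fin m ⊕ Fin k) (Fin m ⊕ Fin k) ℝ, G'.rank ≤ r →
      frobNorm (C * W⁻¹ * Cᵀ - Gnys) ≤ frobNorm (C * W⁻¹ * Cᵀ - G') :=
  stmt_9_general hr hrm W hW K22 K hK C hC V d hV hd hmono hspec Gnys hGnys
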